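/- arXiv:2305.17218 — 3 statements merged into one kernel-verified Lean document; each statement's English description precedes it below -/
import Mathlib

section
/- The set of λ-calculus terms over a type V of variables, Term[V] ::= V | λV.Term[V] | (Term[V] Term[V]), equipped with the unit sending a variable to itself as a term and with bind given by simultaneous capture-avoiding substitution of terms for variables, is a lawful monad: it satisfies the left identity, right identity, and associativity laws of a monad. -/
/-!
STATEMENT 0: the λ-calculus terms `Term[V]` over a type `V` of variables,
with unit sending a variable to itself (`var`) and bind given by
simultaneous capture-avoiding substitution, form a lawful monad
(left identity, right identity, associativity).

The binder in `lam` is represented by extending the variable type by one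
fresh element (`Option V`), which makes simultaneous substitution
capture-avoiding by construction.
-/

universe u

/-- Untyped λ-calculus terms over variables `V`:
`Term[V] ::= V | λV.Term[V] | (Term[V] Term[V])`. -/
inductive LTerm : Type u → Type (u + 1)
  | var {V : Type u} : V → LTerm V
  | lam {V : Type u} : LTerm (Option V) → LTerm V
  | app {V : Type u} : LTerm V → LTerm V → LTerm V

/-- Functorial renaming of (free) variables. -/
def LTerm.map : {V W : Type u} → LTerm V → (V → W) → LTerm W
  | _, _, .var v, f => .var (f v)
  | _, _, .lam t, f => .lam (t.map (Option.map f))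
  | _, _, .app t u, f => .app (t.map f) (u.map f)

/-- Push a substitution under a binder (the freshly bound variable is
sent to itself; everything else is shifted), avoiding capture. -/
def LTerm.lift {V W : Type u} (f : V → LTerm W) : Option V → LTerm (Option W)
  | none => .var none
  | some v => (f v).map some

/-- Monadic bind: simultaneous capture-avoiding substitution of terms for
variables. -/
def LTerm.bind : {V W : Type u} → LTerm V → (V → LTerm W) → LTerm W
  | _, _, .var v, f => f v
  | _, _, .lam t, f => .lam (t.bind (LTerm.lift f))
  | _, _, .app t u, f => .app (t.bind f) (u.bind f)


theorem LTerm.map_map : ∀ {V W X : Type u} (t : LTerm V) (f : V → W) (g : W → X),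
    (t.map f).map g = t.map (g ∘ f)
  | _, _, _, .var v, _, _ => rfl
  | _, _, _, .lam t, f, g => by
    have h : Option.map g ∘ Option.map f = Option.map (g ∘ f) := by
      funext x; cases x <;> rfl
    simp only [LTerm.map, LTerm.map_map, h]
  | _, _, _, .app t u, f, g => by
    simp only [LTerm.map, LTerm.map_map]

theorem LTerm.bind_var : ∀ {V : Type u} (t : LTerm V), t.bind LTerm.var = t
  | _, .var v => rfl
  | V, .lam t => by
    have h : LTerm.lift (LTerm.var (V := V)) = LTerm.var := by
      funext x; cases x <;> rfl
    simp only [LTerm.bind, h, LTerm.bind_var]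
  | _, .app t u => by simp only [LTerm.bind, LTerm.bind_var]

theorem LTerm.bind_map : ∀ {V W X : Type u} (t : LTerm V) (f : V → W) (g : W → LTerm X),
    (t.map f).bind g = t.bind (g ∘ f)
  | _, _, _, .var v, _, _ => rfl
  | _, _, _, .lam t, f, g => by
    have h : LTerm.lift g ∘ Option.map f = LTerm.lift (g ∘ f) := by
      funext x; cases x <;> rfl
    simp only [LTerm.map, LTerm.bind, LTerm.bind_map, h]
  | _, _, _, .app t u, f, g => by simp only [LTerm.map, LTerm.bind, LTerm.bind_map]

theorem LTerm.map_bind : ∀ {V W X : Type u} (t : LTerm V) (f : V → LTerm W) (g : W → X),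
    (t.bind f).map g = t.bind (fun v => (f v).map g)
  | _, _, _, .var v, _, _ => rfl
  | _, _, _, .lam t, f, g => by
    have h : (fun x => (LTerm.lift f x).map (Option.map g))
        = LTerm.lift (fun v => (f v).map g) := by
      funext x
      cases x with
      | none => rfl
      | some v => simp only [LTerm.lift, LTerm.map_map]; rfl
    simp only [LTerm.map, LTerm.bind, LTerm.map_bind, h]
  | _, _, _, .app t u, f, g => by simp only [LTerm.map, LTerm.bind, LTerm.map_bind]

theorem LTerm.bind_assoc : ∀ {V W X : Type u} (t : LTerm V) (f : V → LTerm W) (g : W → LTerm X),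
    (t.bind f).bind g = t.bind (fun v => (f v).bind g)
  | _, _, _, .var v, _, _ => rfl
  | _, _, _, .lam t, f, g => by
    have h : (fun x => (LTerm.lift f x).bind (LTerm.lift g))
        = LTerm.lift (fun v => (f v).bind g) := by
      funext x
      cases x with
      | none => rfl
      | some v =>
        simp only [LTerm.lift, LTerm.bind_map, LTerm.map_bind]
        rfl
    simp only [LTerm.bind, LTerm.bind_assoc, h]
  | _, _, _, .app t u, f, g => by simp only [LTerm.bind, LTerm.bind_assoc]

/-- The λ-calculus term construction, with unit `var` and bind given by
simultaneous capture-avoiding substitution, is a lawful monad: it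
satisfies the left identity, right identity, and associativity laws. -/
theorem lambda_terms_lawful_monad :
    -- left identity
    (∀ {V W : Type u} (v : V) (f : V → LTerm W), (LTerm.var v).bind f = f v) ∧
    -- right identity
    (∀ {V : Type u} (t : LTerm V), t.bind LTerm.var = t) ∧
    -- associativity
    (∀ {V W X : Type u} (t : LTerm V) (f : V → LTerm W) (g : W → LTerm X),
      (t.bind f).bind g = t.bind (fun v => (f v).bind g)) := by
  exact ⟨fun v f => rfl, LTerm.bind_var, LTerm.bind_assoc⟩
end

section
/- α-equivalence on λ-calculus terms, the smallest equivalence relation generated by λx.M ≡ λy.(M{y/x}) whenever y is not free in M, is a congruence compatible with substitution: if M ≡α M' and for every variable v the substituted terms σ(v) ≡α σ'(v), then M bind σ ≡α M' bind σ'. Consequently the substitution monad structure on λ-terms descends to the quotient of Term[V] by α-equivalence, and this quotient is again a lawful monad (an algebra of the term monad). -/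
/-!
The skeleton of a term forgets the names of binders and replaces each bound occurrence by one
anonymous marker, keeping the free variables. `AEq` is exactly equality of skeletons: the
α-rule preserves them, and conversely renaming every binder of a term to one variable `c`
occurring nowhere in it is a chain of α-steps whose result is read off from the skeleton alone.
Bound occurrences must stay anonymous, not indexed by their binder, because `rename` is the
naive renaming and may capture.

Skeletons carry a first-order substitution monad, and the skeleton map turns `bind` into its
substitution, because `bind` renames each binder to a variable free in nothing substituted. So
compatibility with `bind` and the monad laws on the quotient reduce to the monad laws for
skeletons.
-/

/-- Untyped λ-terms over a type `V` of (named) variables. -/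
inductive Term (V : Type) : Type
  | var : V → Term V
  | lam : V → Term V → Term V
  | app : Term V → Term V → Term V

namespace Term

variable {V : Type} [DecidableEq V] [Infinite V]

/-- Free variables of a term. -/
def fv : Term V → Finset V
  | var v => {v}
  | lam x t => fv t \ {x}
  | app t u => fv t ∪ fv u

/-- Naive renaming `M{y/x}` of the free occurrences of the variable `x`
by the variable `y`. -/
def rename (x y : V) : Term V → Term V
  | var v => if v = x then var y else var v
  | lam z t => if z = x then lam z t else lam z (rename x y t)
  | app t u => app (rename x y t) (rename x y u)

/-- A variable fresh for a given finite set. -/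
noncomputable def fresh (s : Finset V) : V :=
  (Infinite.exists_notMem_finset s).choose

/-- Simultaneous capture-avoiding substitution (monadic bind): the bound
variable of an abstraction is systematically renamed to a variable fresh
for everything in sight, so no free variable is ever captured. -/
noncomputable def bind (σ : V → Term V) : Term V → Term V
  | var v => σ v
  | app t u => app (bind σ t) (bind σ u)
  | lam x t =>
      let avoid : Finset V := ((fv t).erase x).biUnion (fun v => fv (σ v)) ∪ fv t
      let y := fresh avoid
      lam y (bind (Function.update σ x (var y)) t)

/-- α-equivalence: the smallest equivalence relation containing all
instances `λx.M ≡ λy.(M{y/x})` with `y` not free in `M` and closed under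
the term constructors. -/
inductive AEq : Term V → Term V → Prop
  | refl (t : Term V) : AEq t t
  | symm {t u : Term V} : AEq t u → AEq u t
  | trans {t u w : Term V} : AEq t u → AEq u w → AEq t w
  | appCong {t t' u u' : Term V} :
      AEq t t' → AEq u u' → AEq (app t u) (app t' u')
  | lamCong (x : V) {t t' : Term V} : AEq t t' → AEq (lam x t) (lam x t')
  | alpha (x y : V) (t : Term V) :
      y ∉ fv t → AEq (lam x t) (lam y (rename x y t))

/-- α-equivalence as a setoid. -/
def aeqSetoid (V : Type) [DecidableEq V] [Infinite V] : Setoid (Term V) :=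
  ⟨AEq, ⟨AEq.refl, AEq.symm, AEq.trans⟩⟩

/-- λ-terms up to α-equivalence. -/
def QTerm (V : Type) [DecidableEq V] [Infinite V] : Type :=
  Quotient (aeqSetoid V)

/-- The class of a term in the quotient. -/
def qmk (t : Term V) : QTerm V := Quotient.mk (aeqSetoid V) t

end Term

namespace Term

inductive Skeleton (V : Type) : Type
  | free : V → Skeleton V
  | bound : Skeleton V
  | lam : Skeleton V → Skeleton V
  | app : Skeleton V → Skeleton V → Skeleton V

namespace Skeleton

variable {V : Type}

def bind (f : V → Skeleton V) : Skeleton V → Skeleton V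
  | free v => f v
  | bound => bound
  | lam s => lam (bind f s)
  | app s t => app (bind f s) (bind f t)

theorem bind_free (s : Skeleton V) : s.bind free = s := by
  induction s <;> simp_all [bind]

theorem bind_bind (s : Skeleton V) (f g : V → Skeleton V) :
    (s.bind f).bind g = s.bind fun v => (f v).bind g := by
  induction s <;> simp_all [bind]

def toTerm (c : V) : Skeleton V → Term V
  | free v => var v
  | bound => var c
  | lam s => Term.lam c (toTerm c s)
  | app s t => Term.app (toTerm c s) (toTerm c t)

end Skeleton

variable {V : Type} [DecidableEq V]

def skel (b : Finset V) : Term V → Skeleton V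
  | var v => if v ∈ b then .bound else .free v
  | lam x t => .lam (skel (insert x b) t)
  | app t u => .app (skel b t) (skel b u)

theorem skel_congr {b₁ b₂ : Finset V} (t : Term V) (h : ∀ v ∈ fv t, v ∈ b₁ ↔ v ∈ b₂) :
    skel b₁ t = skel b₂ t := by
  induction t generalizing b₁ b₂ with
  | var v => simp [skel, h v (by simp [fv])]
  | lam x t ih =>
    refine congrArg Skeleton.lam (ih fun v hv => ?_)
    by_cases hvx : v = x
    · simp [hvx]
    · simp [hvx, h v (by simp [fv, hv, hvx])]
  | app t u iht ihu =>
    simp only [skel]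
    rw [iht fun v hv => h v (by simp [fv, hv]), ihu fun v hv => h v (by simp [fv, hv])]

theorem skel_insert_of_notMem_fv {y : V} {t : Term V} (b : Finset V) (hy : y ∉ fv t) :
    skel (insert y b) t = skel b t :=
  skel_congr t fun v hv => by
    simp only [Finset.mem_insert, or_iff_right_iff_imp]
    rintro rfl
    exact absurd hv hy

theorem skel_rename (x y : V) (t : Term V) {b : Finset V} (hy : y ∈ fv t → y ∈ b) :
    skel (insert y b) (rename x y t) = skel (insert x b) t := by
  induction t generalizing b with
  | var v =>
    by_cases hvx : v = x
    · simp [rename, skel, hvx]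
    · have hvy : v = y → v ∈ b := by rintro rfl; exact hy (by simp [fv])
      rw [rename, if_neg hvx]
      by_cases hvb : v ∈ b <;> by_cases hv : v = y <;> simp_all [skel]
  | lam z s ih =>
    simp only [rename]
    by_cases hzx : z = x
    · subst hzx
      simp only [if_true, skel, Finset.insert_idem]
      refine congrArg Skeleton.lam (skel_congr s fun v hv => ?_)
      by_cases hvz : v = z
      · simp [hvz]
      · have : v = y → v ∈ b := by rintro rfl; exact hy (by simp [fv, hv, hvz])
        simp only [Finset.mem_insert]
        tauto
    · simp only [if_neg hzx, skel, Finset.insert_comm z y, Finset.insert_comm z x]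
      refine congrArg Skeleton.lam (ih fun hys => ?_)
      by_cases hyz : y = z
      · simp [hyz]
      · exact Finset.mem_insert_of_mem (hy (by simp [fv, hys, hyz]))
  | app t u iht ihu =>
    simp only [rename, skel]
    rw [iht fun h => hy (by simp [fv, h]), ihu fun h => hy (by simp [fv, h])]

theorem skel_eq_of_aeq {t u : Term V} (h : AEq t u) (b : Finset V) : skel b t = skel b u := by
  induction h generalizing b with
  | refl t => rfl
  | symm _ ih => exact (ih b).symm
  | trans _ _ ih₁ ih₂ => exact (ih₁ b).trans (ih₂ b)
  | appCong _ _ ih₁ ih₂ => simp only [skel, ih₁ b, ih₂ b]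
  | lamCong x _ ih => simp only [skel, ih]
  | alpha x y t hy =>
    exact congrArg Skeleton.lam (skel_rename x y t fun h => absurd h hy).symm

def vars : Term V → Finset V
  | var v => {v}
  | lam x t => insert x (vars t)
  | app t u => vars t ∪ vars u

def canon (c : V) : Term V → Term V
  | var v => var v
  | lam x t => lam c (rename x c (canon c t))
  | app t u => app (canon c t) (canon c u)

def renameSet (b : Finset V) (c : V) : Term V → Term V
  | var v => if v ∈ b then var c else var v
  | lam z t => lam z (renameSet (b.erase z) c t)
  | app t u => app (renameSet b c t) (renameSet b c u)

theorem notMem_fv_canon {c : V} {t : Term V} (hc : c ∉ vars t) : c ∉ fv (canon c t) := by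
  induction t with
  | var v => simpa [canon, fv, vars] using hc
  | lam x t _ => simp [canon, fv]
  | app t u iht ihu =>
    simp only [vars, Finset.mem_union, not_or] at hc
    simp [canon, fv, iht hc.1, ihu hc.2]

theorem aeq_canon {c : V} {t : Term V} (hc : c ∉ vars t) : AEq t (canon c t) := by
  induction t with
  | var v => exact AEq.refl _
  | lam x t ih =>
    have hct : c ∉ vars t := fun h => hc (by simp [vars, h])
    exact (AEq.lamCong x (ih hct)).trans (AEq.alpha x c _ (notMem_fv_canon hct))
  | app t u iht ihu =>
    simp only [vars, Finset.mem_union, not_or] at hc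
    exact AEq.appCong (iht hc.1) (ihu hc.2)

theorem renameSet_rename {x c : V} (t : Term V) {b : Finset V} (hcb : c ∉ b) :
    renameSet b c (rename x c t) = renameSet (insert x b) c t := by
  induction t generalizing b with
  | var v =>
    by_cases hvx : v = x
    · simp [rename, renameSet, hvx, hcb]
    · simp [rename, renameSet, hvx]
  | lam z t ih =>
    by_cases hzx : z = x
    · simp [rename, renameSet, hzx, Finset.erase_insert_eq_erase]
    · simp only [rename, if_neg hzx, renameSet,
        Finset.erase_insert_of_ne (Ne.symm hzx), ih (fun h => hcb (Finset.mem_of_mem_erase h))]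
  | app t u iht ihu => simp only [rename, renameSet, iht hcb, ihu hcb]

theorem renameSet_empty (c : V) (t : Term V) : renameSet ∅ c t = t := by
  induction t <;> simp_all [renameSet]

theorem renameSet_canon {c : V} {t : Term V} {b : Finset V} (hc : c ∉ vars t) (hcb : c ∉ b) :
    renameSet b c (canon c t) = (skel b t).toTerm c := by
  induction t generalizing b with
  | var v => by_cases hv : v ∈ b <;> simp [canon, renameSet, skel, hv, Skeleton.toTerm]
  | lam x t ih =>
    simp only [vars, Finset.mem_insert, not_or] at hc
    simp only [canon, renameSet, skel, Skeleton.toTerm, Finset.erase_eq_of_notMem hcb,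
      renameSet_rename _ hcb]
    rw [ih hc.2 (by simp [hcb, hc.1])]
  | app t u iht ihu =>
    simp only [vars, Finset.mem_union, not_or] at hc
    simp only [canon, renameSet, skel, Skeleton.toTerm, iht hc.1 hcb, ihu hc.2 hcb]

theorem canon_eq_toTerm_skel {c : V} {t : Term V} (hc : c ∉ vars t) :
    canon c t = (skel ∅ t).toTerm c := by
  rw [← renameSet_canon hc (Finset.notMem_empty c), renameSet_empty]

variable [Infinite V]

theorem aeq_iff_skel_eq {t u : Term V} : AEq t u ↔ skel ∅ t = skel ∅ u := by
  refine ⟨fun h => skel_eq_of_aeq h ∅, fun h => ?_⟩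
  obtain ⟨c, hc⟩ := Infinite.exists_notMem_finset (vars t ∪ vars u)
  rw [Finset.mem_union, not_or] at hc
  have hcanon : canon c t = canon c u := by
    rw [canon_eq_toTerm_skel hc.1, canon_eq_toTerm_skel hc.2, h]
  exact (aeq_canon hc.1).trans (hcanon ▸ (aeq_canon hc.2).symm)

theorem exists_bind_lam (σ : V → Term V) (x : V) (t : Term V) :
    ∃ y, (∀ v ∈ fv t, v ≠ x → y ∉ fv (σ v)) ∧
      bind σ (lam x t) = lam y (bind (Function.update σ x (var y)) t) :=
  ⟨_, fun v hv hvx hy => (Infinite.exists_notMem_finset _).choose_spec <|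
    Finset.mem_union_left _ (Finset.mem_biUnion.2 ⟨v, Finset.mem_erase.2 ⟨hvx, hv⟩, hy⟩), rfl⟩

theorem skel_bind {σ : V → Term V} {f : V → Skeleton V} (t : Term V) {b B : Finset V}
    (hb : ∀ v ∈ b, ∃ w ∈ B, σ v = var w) (hf : ∀ v ∈ fv t, v ∉ b → skel B (σ v) = f v) :
    skel B (bind σ t) = (skel b t).bind f := by
  induction t generalizing σ b B with
  | var v =>
    by_cases hvb : v ∈ b
    · obtain ⟨w, hwB, hσv⟩ := hb v hvb
      simp [bind, skel, Skeleton.bind, hσv, hvb, hwB]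
    · simpa [bind, skel, Skeleton.bind, hvb] using hf v (by simp [fv]) hvb
  | lam x t ih =>
    obtain ⟨y, hy, hbind⟩ := exists_bind_lam σ x t
    rw [hbind]
    refine congrArg Skeleton.lam (ih (fun v hv => ?_) fun v hv hvb => ?_)
    · by_cases hvx : v = x
      · exact ⟨y, Finset.mem_insert_self y B, by simp [hvx]⟩
      · obtain ⟨w, hwB, hσv⟩ := hb v ((Finset.mem_insert.1 hv).resolve_left hvx)
        exact ⟨w, Finset.mem_insert_of_mem hwB, by simp [hvx, hσv]⟩
    · have hvx : v ≠ x := fun h => hvb (by simp [h])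
      have hvb' : v ∉ b := fun h => hvb (Finset.mem_insert_of_mem h)
      rw [Function.update_of_ne hvx, skel_insert_of_notMem_fv B (hy v hv hvx)]
      exact hf v (by simp [fv, hv, hvx]) hvb'
  | app t u iht ihu =>
    simp only [bind, skel, Skeleton.bind]
    rw [iht hb fun v hv => hf v (by simp [fv, hv]), ihu hb fun v hv => hf v (by simp [fv, hv])]

theorem skel_empty_bind (σ : V → Term V) (t : Term V) :
    skel ∅ (bind σ t) = (skel ∅ t).bind fun v => skel ∅ (σ v) :=
  skel_bind t (by simp) fun _ _ _ => rfl

theorem aeq_bind {M M' : Term V} {σ σ' : V → Term V} (h : AEq M M')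
    (hσ : ∀ v, AEq (σ v) (σ' v)) : AEq (bind σ M) (bind σ' M') := by
  simp only [aeq_iff_skel_eq, skel_empty_bind] at h hσ ⊢
  rw [h, funext hσ]

theorem aeq_bind_var (M : Term V) : AEq (bind var M) M := by
  rw [aeq_iff_skel_eq, skel_empty_bind]
  exact (skel ∅ M).bind_free

theorem aeq_bind_bind (M : Term V) (σ τ : V → Term V) :
    AEq (bind τ (bind σ M)) (bind (fun v => bind τ (σ v)) M) := by
  simp only [aeq_iff_skel_eq, skel_empty_bind, Skeleton.bind_bind]

noncomputable def qbind (t : QTerm V) (f : V → QTerm V) : QTerm V :=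
  Quotient.liftOn t (fun M => qmk (bind (fun v => (f v).out) M))
    fun _ _ h => Quotient.sound (aeq_bind h fun _ => AEq.refl _)

theorem qbind_qmk (M : Term V) (σ : V → Term V) :
    qbind (qmk M) (fun v => qmk (σ v)) = qmk (bind σ M) :=
  Quotient.sound <| aeq_bind (AEq.refl M) fun v => Quotient.exact (Quotient.out_eq (qmk (σ v)))

theorem qmk_surjective : Function.Surjective (qmk : Term V → QTerm V) :=
  Quotient.mk_surjective

theorem exists_eq_qmk_comp (f : V → QTerm V) : ∃ σ : V → Term V, f = fun v => qmk (σ v) :=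
  ⟨fun v => (f v).out, funext fun v => (Quotient.out_eq (f v)).symm⟩

/-- α-equivalence is compatible with substitution
(it is a congruence for the monadic bind), hence the substitution monad
structure descends to the quotient of `Term V` by α-equivalence, and the
quotient is again a lawful monad (an algebra of the term monad). -/
theorem alpha_congruence_and_quotient_monad :
    -- compatibility of α-equivalence with substitution
    (∀ (M M' : Term V) (σ σ' : V → Term V),
        AEq M M' → (∀ v, AEq (σ v) (σ' v)) → AEq (bind σ M) (bind σ' M')) ∧
    -- the monad structure descends to the quotient and is lawful there
    (∃ qbind : QTerm V → (V → QTerm V) → QTerm V,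
      -- qbind is induced by bind
      (∀ (M : Term V) (σ : V → Term V),
        qbind (qmk M) (fun v => qmk (σ v)) = qmk (bind σ M)) ∧
      -- left identity
      (∀ (v : V) (f : V → QTerm V), qbind (qmk (var v)) f = f v) ∧
      -- right identity
      (∀ t : QTerm V, qbind t (fun v => qmk (var v)) = t) ∧
      -- associativity
      (∀ (t : QTerm V) (f g : V → QTerm V),
        qbind (qbind t f) g = qbind t (fun v => qbind (f v) g))) := by
  refine ⟨fun _ _ _ _ => aeq_bind, qbind, qbind_qmk, fun v f => Quotient.out_eq (f v),
    fun t => ?_, fun t f g => ?_⟩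
  · obtain ⟨M, rfl⟩ := qmk_surjective t
    exact (qbind_qmk M var).trans (Quotient.sound (aeq_bind_var M))
  · obtain ⟨M, rfl⟩ := qmk_surjective t
    obtain ⟨σ, rfl⟩ := exists_eq_qmk_comp f
    obtain ⟨τ, rfl⟩ := exists_eq_qmk_comp g
    simp only [qbind_qmk]
    exact Quotient.sound (aeq_bind_bind M σ τ)

end Term
end

section
/- The set of π-calculus terms over a type N of names, Term[N] ::= 0 | for(N ← N)Term[N] | N!(N) | (new N)Term[N] | Term[N] | Term[N] | !Term[N], with unit given by the embedding of a name (via the name-parametric construction) and bind given by simultaneous capture-avoiding substitution of names for names, is a lawful monad: it satisfies the left identity, right identity, and associativity laws. -/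
/-!
STATEMENT 2: the π-calculus terms
`Term[N] ::= 0 | for(N ← N)Term[N] | N!(N) | (new N)Term[N] | Term[N] | Term[N] | !Term[N]`
over a type `N` of names, with unit given by the embedding of a name
(via the name-parametric construction: the unit is the identity
assignment of a name to itself, i.e. the trivial Kleisli arrow of the
substitution structure) and bind given by simultaneous capture-avoiding
substitution of names for names, satisfy the left identity, right
identity, and associativity laws of a (Kleisli-style) monad.

Binders (`input` and `nu`) are represented by extending the name type by
one fresh element (`Option N`), which makes simultaneous substitution of
names for names capture-avoiding by construction.
-/

universe u

/-- π-calculus processes over names `N`. -/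
inductive PiTerm : Type u → Type (u + 1)
  | nil {N : Type u} : PiTerm N                                -- 0
  | input {N : Type u} : N → PiTerm (Option N) → PiTerm N      -- for(y ← x)P, binding y
  | output {N : Type u} : N → N → PiTerm N                     -- x!(z)
  | nu {N : Type u} : PiTerm (Option N) → PiTerm N             -- (new x)P, binding x
  | par {N : Type u} : PiTerm N → PiTerm N → PiTerm N          -- P | Q
  | repl {N : Type u} : PiTerm N → PiTerm N                    -- !P

/-- The unit: a name is embedded as itself (the name-parametric
construction has names as the variables being substituted for). -/
def PiTerm.unit {N : Type u} : N → N := id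

/-- Bind: simultaneous capture-avoiding substitution of names for names,
applied throughout a process. -/
def PiTerm.bind : {N M : Type u} → PiTerm N → (N → M) → PiTerm M
  | _, _, .nil, _ => .nil
  | _, _, .input x P, f => .input (f x) (P.bind (Option.map f))
  | _, _, .output x z, f => .output (f x) (f z)
  | _, _, .nu P, f => .nu (P.bind (Option.map f))
  | _, _, .par P Q, f => .par (P.bind f) (Q.bind f)
  | _, _, .repl P, f => .repl (P.bind f)

theorem PiTerm.bind_id : ∀ {N : Type u} (P : PiTerm N), P.bind id = P
  | _, .nil => rfl
  | _, .input x P => by simp [PiTerm.bind, Option.map_id, PiTerm.bind_id P]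
  | _, .output x z => rfl
  | _, .nu P => by simp [PiTerm.bind, Option.map_id, PiTerm.bind_id P]
  | _, .par P Q => by simp [PiTerm.bind, PiTerm.bind_id P, PiTerm.bind_id Q]
  | _, .repl P => by simp [PiTerm.bind, PiTerm.bind_id P]

theorem PiTerm.bind_bind : ∀ {N M L : Type u} (P : PiTerm N) (f : N → M) (g : M → L),
    (P.bind f).bind g = P.bind (fun x => g (f x))
  | _, _, _, .nil, _, _ => rfl
  | _, _, _, .input x P, f, g => by
      simp [PiTerm.bind, PiTerm.bind_bind P, Option.map_map]; rfl
  | _, _, _, .output x z, _, _ => rfl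
  | _, _, _, .nu P, f, g => by
      simp [PiTerm.bind, PiTerm.bind_bind P, Option.map_map]; rfl
  | _, _, _, .par P Q, f, g => by
      simp [PiTerm.bind, PiTerm.bind_bind P, PiTerm.bind_bind Q]
  | _, _, _, .repl P, f, g => by simp [PiTerm.bind, PiTerm.bind_bind P]

/-- The π-calculus term construction, with the unit embedding each name
and bind given by simultaneous capture-avoiding substitution of names
for names, is a lawful monad: left identity, right identity, and
associativity hold. -/
theorem pi_terms_lawful_monad :
    -- left identity: binding the unit-embedded name with a substitution f
    -- is the same as applying f
    (∀ {N M : Type u} (f : N → M) (x : N), f (PiTerm.unit x) = f x) ∧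
    -- right identity: substituting each name by itself is the identity
    (∀ {N : Type u} (P : PiTerm N), P.bind PiTerm.unit = P) ∧
    -- associativity
    (∀ {N M L : Type u} (P : PiTerm N) (f : N → M) (g : M → L),
      (P.bind f).bind g = P.bind (fun x => g (f x))) := by
  exact ⟨fun _ _ => rfl, fun P => PiTerm.bind_id P, fun P f g => PiTerm.bind_bind P f g⟩
end
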